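/- arXiv:math/9403215 — 8 statements merged into one kernel-verified Lean document; each statement's English description precedes it below -/
import Mathlib

section
/- For all natural numbers n, a, b, the alternating sum over integers k of (-1)^k·binom(n+a, n+k)·binom(n+b, b+k)·binom(a+b, a+k) equals (n+a+b)!/(n!·a!·b!) (Dixon's identity). -/
/-- Binomial coefficient `choose m j` for an integer lower index, vanishing for `j < 0`. -/
def ibinom (m : ℕ) (j : ℤ) : ℚ :=
  if 0 ≤ j then (Nat.choose m j.toNat : ℚ) else 0

namespace DixonAux

lemma ibinom_of_neg {m : ℕ} {j : ℤ} (h : j < 0) : ibinom m j = 0 := by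
  simp [ibinom, not_le.2 h]

lemma ibinom_nat (m j : ℕ) : ibinom m (j : ℤ) = (m.choose j : ℚ) := by
  simp [ibinom]

lemma ibinom_of_gt {m : ℕ} {j : ℤ} (h : (m : ℤ) < j) : ibinom m j = 0 := by
  have h0 : 0 ≤ j := le_of_lt (lt_of_le_of_lt (Int.ofNat_nonneg m) h)
  rw [ibinom, if_pos h0, Nat.choose_eq_zero_of_lt (by omega)]
  simp

lemma ibinom_zero (m : ℕ) : ibinom m 0 = 1 := by simp [ibinom]

/-- absorption: `C(m,j+1)*(j+1) = C(m,j)*(m-j)` for all integer `j`. -/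
lemma ibinom_L1 (m : ℕ) (j : ℤ) :
    ibinom m (j + 1) * ((j : ℚ) + 1) = ibinom m j * ((m : ℚ) - (j : ℚ)) := by
  rcases lt_trichotomy j (-1) with h | h | h
  · rw [ibinom_of_neg (by omega), ibinom_of_neg (by omega)]; ring
  · subst h
    rw [show (-1 : ℤ) + 1 = 0 from by ring, ibinom_of_neg (show (-1:ℤ) < 0 from by norm_num)]
    push_cast; ring
  · have h0 : 0 ≤ j := by omega
    lift j to ℕ using h0 with jn
    rw [show (jn : ℤ) + 1 = ((jn + 1 : ℕ) : ℤ) by push_cast; ring, ibinom_nat, ibinom_nat]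
    rcases le_or_gt jn m with hle | hlt
    · have h2 := Nat.choose_succ_right_eq m jn
      have h3 := congrArg (Nat.cast : ℕ → ℚ) h2
      push_cast [Nat.cast_sub hle] at h3 ⊢
      linarith
    · rw [Nat.choose_eq_zero_of_lt hlt, Nat.choose_eq_zero_of_lt (by omega)]
      simp

/-- `C(m+1,j+1)*(j+1) = (m+1)*C(m,j)` for all integer `j`. -/
lemma ibinom_L3 (m : ℕ) (j : ℤ) :
    ibinom (m + 1) (j + 1) * ((j : ℚ) + 1) = ((m : ℚ) + 1) * ibinom m j := by
  rcases lt_trichotomy j (-1) with h | h | h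
  · rw [ibinom_of_neg (by omega), ibinom_of_neg (by omega)]; ring
  · subst h
    rw [show (-1 : ℤ) + 1 = 0 from by ring, ibinom_of_neg (show (-1:ℤ) < 0 from by norm_num)]
    push_cast; ring
  · have h0 : 0 ≤ j := by omega
    lift j to ℕ using h0 with jn
    rw [show (jn : ℤ) + 1 = ((jn + 1 : ℕ) : ℤ) by push_cast; ring, ibinom_nat, ibinom_nat]
    have h2 := Nat.add_one_mul_choose_eq m jn
    have h3 := congrArg (Nat.cast : ℕ → ℚ) h2
    push_cast at h3 ⊢
    linarith

/-- `C(m+1,j)*(m+1-j) = (m+1)*C(m,j)` for all integer `j`. -/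
lemma ibinom_L4 (m : ℕ) (j : ℤ) :
    ibinom (m + 1) j * ((m : ℚ) + 1 - (j : ℚ)) = ((m : ℚ) + 1) * ibinom m j := by
  rcases lt_or_ge j 0 with h | h
  · rw [ibinom_of_neg h, ibinom_of_neg h]; ring
  · lift j to ℕ using h with jn
    rw [ibinom_nat, ibinom_nat]
    rcases le_or_gt jn (m + 1) with hle | hlt
    · have h2 := Nat.choose_mul_succ_eq m jn
      have h3 := congrArg (Nat.cast : ℕ → ℚ) h2
      push_cast [Nat.cast_sub hle] at h3 ⊢
      linarith
    · rw [Nat.choose_eq_zero_of_lt hlt, Nat.choose_eq_zero_of_lt (by omega)]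
      simp

/-- The WZ companion term. -/
noncomputable def Gd (n a b : ℕ) (k : ℤ) : ℚ :=
  -(((a : ℚ) + k) / 2) * (-1 : ℚ) ^ k * ibinom (n + a) ((n : ℤ) + k) *
    ibinom (n + b) ((b : ℤ) + k - 1) * ibinom (a + b) ((a : ℤ) + k)

lemma step (n a b : ℕ) (k : ℤ) :
    ((n : ℚ) + 1) *
        ((-1 : ℚ) ^ k * ibinom (n + 1 + a) ((n : ℤ) + 1 + k) *
          ibinom (n + 1 + b) ((b : ℤ) + k) * ibinom (a + b) ((a : ℤ) + k)) -
      ((n : ℚ) + a + b + 1) *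
        ((-1 : ℚ) ^ k * ibinom (n + a) ((n : ℤ) + k) * ibinom (n + b) ((b : ℤ) + k) *
          ibinom (a + b) ((a : ℤ) + k))
      = Gd n a b (k + 1) - Gd n a b k := by
  have hz : (-1 : ℚ) ^ (k + 1) = -(-1 : ℚ) ^ k := by
    rw [zpow_add_one₀ (by norm_num)]; ring
  have e1 : n + 1 + a = (n + a) + 1 := by omega
  have e2 : n + 1 + b = (n + b) + 1 := by omega
  have e3 : (n : ℤ) + 1 + k = ((n : ℤ) + k) + 1 := by ring
  have hR1 := ibinom_L1 (n + a) ((n : ℤ) + k)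
  have hR2 := ibinom_L1 (n + b) ((b : ℤ) + k - 1)
  have hR3 := ibinom_L1 (a + b) ((a : ℤ) + k)
  have hR4 := ibinom_L3 (n + a) ((n : ℤ) + k)
  have hR5 := ibinom_L4 (n + b) ((b : ℤ) + k)
  rw [show (b : ℤ) + k - 1 + 1 = (b : ℤ) + k by ring] at hR2
  push_cast at hR1 hR2 hR3 hR4 hR5
  simp only [Gd, hz, e1, e2, e3]
  rw [show (b : ℤ) + (k + 1) - 1 = (b : ℤ) + k from by ring,
      show (n : ℤ) + (k + 1) = (n : ℤ) + k + 1 from by ring,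
      show (a : ℤ) + (k + 1) = (a : ℤ) + k + 1 from by ring]
  by_cases hk1 : k = (n : ℤ) + 1
  · subst hk1
    have hY : ibinom (n + b) ((b : ℤ) + ((n : ℤ) + 1)) = 0 :=
      ibinom_of_gt (by push_cast; omega)
    have hYp : ibinom (n + b + 1) ((b : ℤ) + ((n : ℤ) + 1)) = 1 := by
      rw [show (b : ℤ) + ((n : ℤ) + 1) = ((n + b + 1 : ℕ) : ℤ) from by push_cast; ring,
        ibinom_nat, Nat.choose_self, Nat.cast_one]
    have hY0 : ibinom (n + b) ((b : ℤ) + ((n : ℤ) + 1) - 1) = 1 := by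
      rw [show (b : ℤ) + ((n : ℤ) + 1) - 1 = ((n + b : ℕ) : ℤ) from by push_cast; ring,
        ibinom_nat, Nat.choose_self, Nat.cast_one]
    push_cast at hR4 ⊢
    set s := (-1 : ℚ) ^ ((n : ℤ) + 1) with hs
    set X := ibinom (n + a) ((n : ℤ) + ((n : ℤ) + 1)) with hX
    set Z := ibinom (a + b) ((a : ℤ) + ((n : ℤ) + 1)) with hZ
    set X1 := ibinom (n + a) ((n : ℤ) + ((n : ℤ) + 1) + 1) with hX1
    set Z1 := ibinom (a + b) ((a : ℤ) + ((n : ℤ) + 1) + 1) with hZ1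
    set Xp := ibinom (n + a + 1) ((n : ℤ) + ((n : ℤ) + 1) + 1) with hXp
    linear_combination (((n : ℚ) + 1) * s * Xp * Z) * hYp
      + (-((n : ℚ) + a + b + 1) * s * X * Z - (((a : ℚ) + n + 2) / 2) * s * X1 * Z1) * hY
      + (-(((a : ℚ) + n + 1) / 2) * s * X * Z) * hY0
      + (s * Z / 2) * hR4
  · by_cases hk2 : k = -((n : ℤ) + 1)
    · subst hk2
      have hX : ibinom (n + a) ((n : ℤ) + -((n : ℤ) + 1)) = 0 :=
        ibinom_of_neg (by omega)
      have hXp : ibinom (n + a + 1) ((n : ℤ) + -((n : ℤ) + 1) + 1) = 1 := by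
        rw [show (n : ℤ) + -((n : ℤ) + 1) + 1 = 0 from by ring, ibinom_zero]
      have hX1 : ibinom (n + a) ((n : ℤ) + -((n : ℤ) + 1) + 1) = 1 := by
        rw [show (n : ℤ) + -((n : ℤ) + 1) + 1 = 0 from by ring, ibinom_zero]
      have hc1 : ((-((n : ℤ) + 1) : ℤ) : ℚ) = -((n : ℚ) + 1) := by push_cast; ring
      have hc2 : ((-((n : ℤ) + 1) + 1 : ℤ) : ℚ) = -(n : ℚ) := by push_cast; ring
      simp only [hc1, hc2] at hR3 hR5 ⊢
      set s := (-1 : ℚ) ^ (-((n : ℤ) + 1)) with hs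
      set Y := ibinom (n + b) ((b : ℤ) + -((n : ℤ) + 1)) with hY
      set Z := ibinom (a + b) ((a : ℤ) + -((n : ℤ) + 1)) with hZ
      set Y0 := ibinom (n + b) ((b : ℤ) + -((n : ℤ) + 1) - 1) with hY0
      set Z1 := ibinom (a + b) ((a : ℤ) + -((n : ℤ) + 1) + 1) with hZ1
      set Yp := ibinom (n + b + 1) ((b : ℤ) + -((n : ℤ) + 1)) with hYp
      linear_combination
        ((-((n : ℚ) + a + b + 1)) * s * Y * Z + (((n : ℚ) - a + 1) / 2) * s * Y0 * Z) * hX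
        + (((n : ℚ) + 1) * s * Yp * Z) * hXp
        + (-(((a : ℚ) - n) / 2) * s * Y * Z1) * hX1
        + (s * Z / 2) * hR5 - (s * Y / 2) * hR3
    · have hm1 : ((n : ℚ) + k + 1) ≠ 0 := by
        intro h
        apply hk2
        have : ((k : ℚ)) = ((-((n : ℤ) + 1) : ℤ) : ℚ) := by push_cast; linarith
        exact_mod_cast this
      have hm2 : ((n : ℚ) + 1 - k) ≠ 0 := by
        intro h
        apply hk1
        have : ((k : ℚ)) = (((n : ℤ) + 1 : ℤ) : ℚ) := by push_cast; linarith
        exact_mod_cast this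
      apply mul_left_cancel₀ (mul_ne_zero hm1 hm2)
      push_cast
      set X := ibinom (n + a) ((n : ℤ) + k)
      set Y := ibinom (n + b) ((b : ℤ) + k)
      set Z := ibinom (a + b) ((a : ℤ) + k)
      set X1 := ibinom (n + a) ((n : ℤ) + k + 1)
      set Y0 := ibinom (n + b) ((b : ℤ) + k - 1)
      set Z1 := ibinom (a + b) ((a : ℤ) + k + 1)
      set Xp := ibinom (n + a + 1) ((n : ℤ) + k + 1)
      set Yp := ibinom (n + b + 1) ((b : ℤ) + k)
      set s := (-1 : ℚ) ^ k
      linear_combination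
        (-(((a : ℚ) + k + 1) * Y * Z1 * ((n : ℚ) + 1 - k) * s / 2)) * hR1
        + (((a : ℚ) + k) * X * Z * ((n : ℚ) + k + 1) * s / 2) * hR2
        + (-(((a : ℚ) - k) * ((n : ℚ) + 1 - k) * X * Y * s / 2)) * hR3
        + (((n : ℚ) + 1) * Z * ((n : ℚ) + 1 - k) * Yp * s) * hR4
        + (((n : ℚ) + 1) * ((n : ℚ) + a + 1) * X * Z * s) * hR5

lemma term_vanish (n a b : ℕ) (k : ℤ)
    (hk : k ∉ Finset.Icc (-(min n (min a b) : ℤ)) (min n (min a b) : ℤ)) :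
    (-1 : ℚ) ^ k * ibinom (n + a) ((n : ℤ) + k) * ibinom (n + b) ((b : ℤ) + k) *
      ibinom (a + b) ((a : ℤ) + k) = 0 := by
  simp only [Finset.mem_Icc, not_and_or, not_le] at hk
  have key : (n : ℤ) + k < 0 ∨ (a : ℤ) + k < 0 ∨ (b : ℤ) + k < 0 ∨
      ((n + a : ℕ) : ℤ) < (n : ℤ) + k ∨ ((n + b : ℕ) : ℤ) < (b : ℤ) + k ∨
      ((a + b : ℕ) : ℤ) < (a : ℤ) + k := by
    push_cast at hk ⊢
    omega
  rcases key with h | h | h | h | h | h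
  · rw [ibinom_of_neg h]; ring
  · rw [ibinom_of_neg h]; ring
  · rw [ibinom_of_neg h]; ring
  · rw [ibinom_of_gt h]; ring
  · rw [ibinom_of_gt h]; ring
  · rw [ibinom_of_gt h]; ring

lemma tele (g : ℤ → ℚ) (M N : ℤ) (h : M ≤ N) :
    ∑ k ∈ Finset.Icc M N, (g (k + 1) - g k) = g (N + 1) - g M := by
  refine Int.le_induction (motive := fun N _ => ∑ k ∈ Finset.Icc M N, (g (k + 1) - g k) = g (N + 1) - g M) ?_ ?_ N h
  · simp
  · intro N hMN ih
    have hins : Finset.Icc M (N + 1) = insert (N + 1) (Finset.Icc M N) := by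
      ext x; simp only [Finset.mem_Icc, Finset.mem_insert]; omega
    rw [hins, Finset.sum_insert (by simp only [Finset.mem_Icc]; omega), ih]
    ring

lemma Gd_left (n a b : ℕ) : Gd n a b (-((n : ℤ) + a + b + 1)) = 0 := by
  unfold Gd
  rw [ibinom_of_neg (j := (n : ℤ) + -((n : ℤ) + a + b + 1)) (by omega)]
  ring

lemma Gd_right (n a b : ℕ) : Gd n a b (((n : ℤ) + a + b + 1) + 1) = 0 := by
  unfold Gd
  rw [ibinom_of_gt (m := a + b) (j := (a : ℤ) + (((n : ℤ) + a + b + 1) + 1))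
    (by push_cast; omega)]
  ring

end DixonAux


theorem dixon_identity (n a b : ℕ) :
    ∑ k ∈ Finset.Icc (-(min n (min a b) : ℤ)) (min n (min a b) : ℤ),
        (-1 : ℚ) ^ k * ibinom (n + a) ((n : ℤ) + k) * ibinom (n + b) ((b : ℤ) + k) *
          ibinom (a + b) ((a : ℤ) + k)
      = (Nat.factorial (n + a + b) : ℚ) /
          (Nat.factorial n * Nat.factorial a * Nat.factorial b) := by
  open DixonAux in
  induction n with
  | zero =>
    have hb : min (((0:ℕ)):ℤ) (min (a:ℤ) (b:ℤ)) = 0 := by omega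
    rw [hb, neg_zero, Finset.Icc_self, Finset.sum_singleton, zpow_zero,
      show (((0:ℕ)):ℤ) + 0 = (((0:ℕ)):ℤ) from by ring, ibinom_nat,
      show (b:ℤ) + 0 = (((b:ℕ)):ℤ) from by ring, ibinom_nat,
      show (a:ℤ) + 0 = (((a:ℕ)):ℤ) from by ring, ibinom_nat,
      Nat.choose_zero_right, Nat.zero_add, Nat.choose_self,
      Nat.cast_choose ℚ (show a ≤ a + b by omega),
      show a + b - a = b from by omega]
    rw [Nat.factorial_zero]
    norm_num
  | succ n ih =>
    have hstep : ∀ k ∈ Finset.Icc (-((n:ℤ) + a + b + 1)) ((n:ℤ) + a + b + 1),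
        ((n:ℚ) + 1) * ((-1:ℚ)^k * ibinom (n+1+a) (((n+1:ℕ):ℤ) + k) *
            ibinom (n+1+b) ((b:ℤ) + k) * ibinom (a+b) ((a:ℤ) + k))
          - ((n:ℚ) + a + b + 1) * ((-1:ℚ)^k * ibinom (n+a) ((n:ℤ) + k) *
            ibinom (n+b) ((b:ℤ) + k) * ibinom (a+b) ((a:ℤ) + k))
          = Gd n a b (k + 1) - Gd n a b k := by
      intro k _
      have hc : (((n+1:ℕ)):ℤ) = (n:ℤ) + 1 := by push_cast; ring
      rw [hc]
      exact step n a b k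
    have h1 : ∑ k ∈ Finset.Icc (-(min ((n+1:ℕ)) (min a b) : ℤ)) ((min ((n+1:ℕ)) (min a b) : ℤ)),
        ((-1:ℚ)^k * ibinom (n+1+a) (((n+1:ℕ):ℤ) + k) *
          ibinom (n+1+b) ((b:ℤ) + k) * ibinom (a+b) ((a:ℤ) + k))
        = ∑ k ∈ Finset.Icc (-((n:ℤ) + a + b + 1)) ((n:ℤ) + a + b + 1),
        ((-1:ℚ)^k * ibinom (n+1+a) (((n+1:ℕ):ℤ) + k) *
          ibinom (n+1+b) ((b:ℤ) + k) * ibinom (a+b) ((a:ℤ) + k)) := by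
      apply Finset.sum_subset
      · intro x hx
        simp only [Finset.mem_Icc] at hx ⊢
        push_cast at hx ⊢
        omega
      · intro x _ hx
        exact term_vanish (n+1) a b x hx
    have h0 : ∑ k ∈ Finset.Icc (-(min n (min a b) : ℤ)) ((min n (min a b) : ℤ)),
        ((-1:ℚ)^k * ibinom (n+a) ((n:ℤ) + k) *
          ibinom (n+b) ((b:ℤ) + k) * ibinom (a+b) ((a:ℤ) + k))
        = ∑ k ∈ Finset.Icc (-((n:ℤ) + a + b + 1)) ((n:ℤ) + a + b + 1),
        ((-1:ℚ)^k * ibinom (n+a) ((n:ℤ) + k) *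
          ibinom (n+b) ((b:ℤ) + k) * ibinom (a+b) ((a:ℤ) + k)) := by
      apply Finset.sum_subset
      · intro x hx
        simp only [Finset.mem_Icc] at hx ⊢
        push_cast at hx ⊢
        omega
      · intro x _ hx
        exact term_vanish n a b x hx
    have key : ((n:ℚ) + 1) * (∑ k ∈ Finset.Icc (-((n:ℤ) + a + b + 1)) ((n:ℤ) + a + b + 1),
          ((-1:ℚ)^k * ibinom (n+1+a) (((n+1:ℕ):ℤ) + k) *
            ibinom (n+1+b) ((b:ℤ) + k) * ibinom (a+b) ((a:ℤ) + k)))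
        - ((n:ℚ) + a + b + 1) * (∑ k ∈ Finset.Icc (-((n:ℤ) + a + b + 1)) ((n:ℤ) + a + b + 1),
          ((-1:ℚ)^k * ibinom (n+a) ((n:ℤ) + k) *
            ibinom (n+b) ((b:ℤ) + k) * ibinom (a+b) ((a:ℤ) + k))) = 0 := by
      rw [Finset.mul_sum, Finset.mul_sum, ← Finset.sum_sub_distrib,
        Finset.sum_congr rfl hstep, tele (Gd n a b) _ _ (by omega), Gd_right, Gd_left]
      ring
    have hfa : ((Nat.factorial a : ℚ)) ≠ 0 := Nat.cast_ne_zero.2 (Nat.factorial_ne_zero _)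
    have hfb : ((Nat.factorial b : ℚ)) ≠ 0 := Nat.cast_ne_zero.2 (Nat.factorial_ne_zero _)
    have hfn : ((Nat.factorial n : ℚ)) ≠ 0 := Nat.cast_ne_zero.2 (Nat.factorial_ne_zero _)
    have hn1 : ((n:ℚ) + 1) ≠ 0 := by positivity
    have ih2 : (∑ k ∈ Finset.Icc (-((n:ℤ) + a + b + 1)) ((n:ℤ) + a + b + 1),
          ((-1:ℚ)^k * ibinom (n+a) ((n:ℤ) + k) *
            ibinom (n+b) ((b:ℤ) + k) * ibinom (a+b) ((a:ℤ) + k)))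
          * ((Nat.factorial n : ℚ) * Nat.factorial a * Nat.factorial b)
        = (Nat.factorial (n + a + b) : ℚ) := by
      rw [← h0, ih]
      field_simp
    rw [h1, eq_div_iff (by exact mul_ne_zero (mul_ne_zero
        (Nat.cast_ne_zero.2 (Nat.factorial_ne_zero (n+1))) hfa) hfb),
      show (n+1) + a + b = (n + a + b) + 1 from by omega, Nat.factorial_succ (n + a + b),
      Nat.factorial_succ n]
    push_cast at key ih2 ⊢
    linear_combination ((Nat.factorial n : ℚ) * Nat.factorial a * Nat.factorial b) * key
      + ((n:ℚ) + a + b + 1) * ih2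
end

section
/- Define a(n) = sum over k of (-1)^k / ((n+k)!·(n-k)!·(b+k)!·(b-k)!·(a+k)!·(a-k)!) (sum over integers k where all factorial arguments are nonnegative). Then a(n) satisfies the first-order recurrence 2(n+1)(n+a+1)(n+b+1)·a(n+1) = 2(n+a+b+1)·a(n). -/
/-- The Dixon-type sum `a(n) = ∑_k (-1)^k / ((n+k)!(n-k)!(b+k)!(b-k)!(a+k)!(a-k)!)`,
summed over integers `k` with `|k| ≤ min(n,a,b)`. -/
noncomputable def dixonSum (a b n : ℕ) : ℚ :=
  ∑ k ∈ Finset.Icc (-(min n (min a b) : ℤ)) (min n (min a b) : ℤ),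
    (-1 : ℚ) ^ k /
      (Nat.factorial ((n : ℤ) + k).toNat * Nat.factorial ((n : ℤ) - k).toNat *
        Nat.factorial ((b : ℤ) + k).toNat * Nat.factorial ((b : ℤ) - k).toNat *
        Nat.factorial ((a : ℤ) + k).toNat * Nat.factorial ((a : ℤ) - k).toNat)


/-- Reciprocal factorial extended by zero to negative integers. -/
def gq (m : ℤ) : ℚ := if 0 ≤ m then ((m.toNat).factorial : ℚ)⁻¹ else 0

lemma gq_neg {m : ℤ} (h : m < 0) : gq m = 0 := by
  simp [gq, not_le.mpr h]

lemma gq_nonneg {m : ℤ} (h : 0 ≤ m) : gq m = ((m.toNat).factorial : ℚ)⁻¹ := if_pos h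

lemma gq_step (m : ℤ) : gq m = ((m : ℚ) + 1) * gq (m + 1) := by
  rcases lt_trichotomy m (-1) with h | h | h
  · rw [gq_neg (by omega), gq_neg (by omega), mul_zero]
  · subst h
    rw [gq_neg (by omega)]
    norm_num
  · have h0 : 0 ≤ m := by omega
    have h1 : 0 ≤ m + 1 := by omega
    rw [gq_nonneg h0, gq_nonneg h1]
    have ht : (m + 1).toNat = m.toNat + 1 := by omega
    rw [ht, Nat.factorial_succ]
    have hm : ((m : ℚ) + 1) = ((m.toNat + 1 : ℕ) : ℚ) := by
      push_cast
      have : ((m.toNat : ℤ) : ℚ) = (m : ℚ) := by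
        rw [Int.toNat_of_nonneg h0]
      push_cast at this
      linarith
    rw [hm]
    push_cast
    have hf : ((m.toNat.factorial : ℚ)) ≠ 0 := by positivity
    have hm1 : ((m.toNat : ℚ) + 1) ≠ 0 := by positivity
    field_simp

lemma gq_step' (m m' : ℤ) (h : m' = m + 1) : gq m = ((m : ℚ) + 1) * gq m' := by
  subst h; exact gq_step m

/-- The summand, defined for all integers `k` (vanishing outside the support). -/
def Fq (a b n : ℕ) (k : ℤ) : ℚ :=
  (-1 : ℚ) ^ k *
    (gq ((n : ℤ) + k) * gq ((n : ℤ) - k) * gq ((a : ℤ) + k) * gq ((a : ℤ) - k) *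
      gq ((b : ℤ) + k) * gq ((b : ℤ) - k))

/-- The WZ certificate function. -/
def Gq (a b n : ℕ) (k : ℤ) : ℚ :=
  -((-1 : ℚ) ^ k *
    (gq ((n : ℤ) + k) * gq ((n : ℤ) + 1 - k) * gq ((a : ℤ) + k - 1) * gq ((a : ℤ) - k) *
      gq ((b : ℤ) + k - 1) * gq ((b : ℤ) - k)))

lemma Fq_eq_zero (a b n : ℕ) (k : ℤ)
    (h : ((min n (min a b) : ℕ) : ℤ) < k ∨ k < -((min n (min a b) : ℕ) : ℤ)) :
    Fq a b n k = 0 := by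
  unfold Fq
  have h' : (n : ℤ) - k < 0 ∨ (n : ℤ) + k < 0 ∨ (a : ℤ) - k < 0 ∨ (a : ℤ) + k < 0 ∨
      (b : ℤ) - k < 0 ∨ (b : ℤ) + k < 0 := by omega
  rcases h' with h' | h' | h' | h' | h' | h' <;> rw [gq_neg h'] <;> ring

lemma pointwise (a b n : ℕ) (k : ℤ) :
    2 * ((n : ℚ) + 1) * ((n : ℚ) + a + 1) * ((n : ℚ) + b + 1) * Fq a b (n + 1) k
      - 2 * ((n : ℚ) + a + b + 1) * Fq a b n k
      = Gq a b n (k + 1) - Gq a b n k := by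
  have e1 : gq ((n : ℤ) + k) = ((n : ℚ) + (k : ℚ) + 1) * gq ((n : ℤ) + k + 1) := by
    rw [gq_step' ((n : ℤ) + k) ((n : ℤ) + k + 1) (by ring)]
    push_cast; ring
  have e2 : gq ((n : ℤ) - k) = ((n : ℚ) - (k : ℚ) + 1) * gq ((n : ℤ) + 1 - k) := by
    rw [gq_step' ((n : ℤ) - k) ((n : ℤ) + 1 - k) (by ring)]
    push_cast; ring
  have e3 : gq ((a : ℤ) + k - 1) = ((a : ℚ) + (k : ℚ)) * gq ((a : ℤ) + k) := by
    rw [gq_step' ((a : ℤ) + k - 1) ((a : ℤ) + k) (by ring)]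
    push_cast; ring
  have e4 : gq ((a : ℤ) - k - 1) = ((a : ℚ) - (k : ℚ)) * gq ((a : ℤ) - k) := by
    rw [gq_step' ((a : ℤ) - k - 1) ((a : ℤ) - k) (by ring)]
    push_cast; ring
  have e5 : gq ((b : ℤ) + k - 1) = ((b : ℚ) + (k : ℚ)) * gq ((b : ℤ) + k) := by
    rw [gq_step' ((b : ℤ) + k - 1) ((b : ℤ) + k) (by ring)]
    push_cast; ring
  have e6 : gq ((b : ℤ) - k - 1) = ((b : ℚ) - (k : ℚ)) * gq ((b : ℤ) - k) := by
    rw [gq_step' ((b : ℤ) - k - 1) ((b : ℤ) - k) (by ring)]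
    push_cast; ring
  unfold Fq Gq
  push_cast
  rw [zpow_add_one₀ (by norm_num : (-1 : ℚ) ≠ 0)]
  rw [show (n : ℤ) + 1 + k = (n : ℤ) + k + 1 from by ring,
      show (n : ℤ) + (k + 1) = (n : ℤ) + k + 1 from by ring,
      show (n : ℤ) + 1 - (k + 1) = (n : ℤ) - k from by ring,
      show (a : ℤ) + (k + 1) - 1 = (a : ℤ) + k from by ring,
      show (a : ℤ) - (k + 1) = (a : ℤ) - k - 1 from by ring,
      show (b : ℤ) + (k + 1) - 1 = (b : ℤ) + k from by ring,
      show (b : ℤ) - (k + 1) = (b : ℤ) - k - 1 from by ring]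
  rw [e1, e2, e3, e4, e5, e6]
  ring

lemma telescope (f : ℤ → ℚ) (N : ℕ) :
    ∑ k ∈ Finset.Icc (-(N : ℤ)) (N : ℤ), (f (k + 1) - f k) = f ((N : ℤ) + 1) - f (-(N : ℤ)) := by
  have hmap : Finset.Icc (-(N : ℤ)) (N : ℤ)
      = (Finset.range (2 * N + 1)).map
          ⟨fun i : ℕ => -(N : ℤ) + (i : ℤ), show Function.Injective (fun i : ℕ => -(N : ℤ) + (i : ℤ)) from fun i j h => by simpa using h⟩ := by
    ext x
    simp only [Finset.mem_Icc, Finset.mem_map, Finset.mem_range, Function.Embedding.coeFn_mk]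
    constructor
    · intro ⟨h1, h2⟩
      exact ⟨(x + N).toNat, by omega, by omega⟩
    · rintro ⟨i, hi, rfl⟩
      omega
  rw [hmap, Finset.sum_map]
  simp only [Function.Embedding.coeFn_mk]
  have h := Finset.sum_range_sub (fun i : ℕ => f (-(N : ℤ) + i)) (2 * N + 1)
  have hcong : ∀ i ∈ Finset.range (2 * N + 1),
      f (-(N : ℤ) + i + 1) - f (-(N : ℤ) + i)
        = f (-(N : ℤ) + (↑(i + 1) : ℤ)) - f (-(N : ℤ) + i) := by
    intro i _
    congr 2
    push_cast
    ring
  rw [Finset.sum_congr rfl hcong, h]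
  congr 2 <;> push_cast <;> ring

lemma dixonSum_eq (a b n N : ℕ) (h : min n (min a b) ≤ N) :
    dixonSum a b n = ∑ k ∈ Finset.Icc (-(N : ℤ)) (N : ℤ), Fq a b n k := by
  unfold dixonSum
  have h1 : ∀ k ∈ Finset.Icc (-(min n (min a b) : ℤ)) (min n (min a b) : ℤ),
      (-1 : ℚ) ^ k /
        (Nat.factorial ((n : ℤ) + k).toNat * Nat.factorial ((n : ℤ) - k).toNat *
          Nat.factorial ((b : ℤ) + k).toNat * Nat.factorial ((b : ℤ) - k).toNat *
          Nat.factorial ((a : ℤ) + k).toNat * Nat.factorial ((a : ℤ) - k).toNat)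
        = Fq a b n k := by
    intro k hk
    rw [Finset.mem_Icc] at hk
    have hmin : (min n (min a b) : ℤ) = ((min n (min a b) : ℕ) : ℤ) := by push_cast; omega
    rw [hmin] at hk
    unfold Fq
    rw [gq_nonneg (show (0:ℤ) ≤ (n : ℤ) + k by omega),
        gq_nonneg (show (0:ℤ) ≤ (n : ℤ) - k by omega),
        gq_nonneg (show (0:ℤ) ≤ (a : ℤ) + k by omega),
        gq_nonneg (show (0:ℤ) ≤ (a : ℤ) - k by omega),
        gq_nonneg (show (0:ℤ) ≤ (b : ℤ) + k by omega),
        gq_nonneg (show (0:ℤ) ≤ (b : ℤ) - k by omega),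
        div_eq_mul_inv]
    congr 1
    rw [mul_inv, mul_inv, mul_inv, mul_inv, mul_inv]
    ring
  rw [Finset.sum_congr rfl h1]
  apply Finset.sum_subset
  · apply Finset.Icc_subset_Icc
    · simp only [neg_le_neg_iff]
      exact_mod_cast h
    · exact_mod_cast h
  · intro x hx hxn
    rw [Finset.mem_Icc] at hx hxn
    apply Fq_eq_zero
    push_cast at hx hxn ⊢
    omega

lemma Gq_top (a b n : ℕ) : Gq a b n (((n + a + b + 2 : ℕ) : ℤ) + 1) = 0 := by
  unfold Gq
  rw [gq_neg (show (a : ℤ) - (((n + a + b + 2 : ℕ) : ℤ) + 1) < 0 by push_cast; omega)]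
  ring

lemma Gq_bot (a b n : ℕ) : Gq a b n (-((n + a + b + 2 : ℕ) : ℤ)) = 0 := by
  unfold Gq
  rw [gq_neg (show (a : ℤ) + (-((n + a + b + 2 : ℕ) : ℤ)) - 1 < 0 by push_cast; omega)]
  ring

theorem dixon_recurrence (a b n : ℕ) :
    2 * ((n : ℚ) + 1) * ((n : ℚ) + a + 1) * ((n : ℚ) + b + 1) * dixonSum a b (n + 1)
      = 2 * ((n : ℚ) + a + b + 1) * dixonSum a b n := by
  set N : ℕ := n + a + b + 2 with hN
  have hN1 : min (n + 1) (min a b) ≤ N := by omega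
  have hN2 : min n (min a b) ≤ N := by omega
  rw [dixonSum_eq a b (n + 1) N hN1, dixonSum_eq a b n N hN2]
  rw [Finset.mul_sum, Finset.mul_sum]
  rw [← sub_eq_zero, ← Finset.sum_sub_distrib]
  have key : ∀ k ∈ Finset.Icc (-(N : ℤ)) (N : ℤ),
      2 * ((n : ℚ) + 1) * ((n : ℚ) + a + 1) * ((n : ℚ) + b + 1) * Fq a b (n + 1) k
        - 2 * ((n : ℚ) + a + b + 1) * Fq a b n k
        = Gq a b n (k + 1) - Gq a b n k := fun k _ => pointwise a b n k
  rw [Finset.sum_congr rfl key, telescope (Gq a b n) N, Gq_top, Gq_bot, sub_zero]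
end

section
/- Define a(n) = sum over k from 0 to n of binom(n,k)·binom(n+k,k). Then a(n) satisfies the recurrence (n+1)·a(n+1) = (6n+3)·a(n) − n·a(n-1) for n ≥ 1. -/
open Nat Finset

private lemma delannoy_generic (j r : ℕ) :
    ((j:ℚ)+r+3) * ((j+r+3).choose (j+1)) * ((2*j+r+4).choose (j+1))
    + ((j:ℚ)+r+2) * ((j+r+1).choose (j+1)) * ((2*j+r+2).choose (j+1))
    = (2*((j:ℚ)+r+2)+1) * ((j+r+2).choose (j+1)) * ((2*j+r+3).choose (j+1))
    + (4*((j:ℚ)+r+2)+2) * ((j+r+2).choose j) * ((2*j+r+2).choose j) := by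
  rw [Nat.cast_choose ℚ (by omega : j+1 ≤ j+r+3),
      Nat.cast_choose ℚ (by omega : j+1 ≤ 2*j+r+4),
      Nat.cast_choose ℚ (by omega : j+1 ≤ j+r+1),
      Nat.cast_choose ℚ (by omega : j+1 ≤ 2*j+r+2),
      Nat.cast_choose ℚ (by omega : j+1 ≤ j+r+2),
      Nat.cast_choose ℚ (by omega : j+1 ≤ 2*j+r+3),
      Nat.cast_choose ℚ (by omega : j ≤ j+r+2),
      Nat.cast_choose ℚ (by omega : j ≤ 2*j+r+2)]
  have e1 : j+r+3-(j+1) = r+2 := by omega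
  have e2 : 2*j+r+4-(j+1) = j+r+3 := by omega
  have e3 : j+r+1-(j+1) = r := by omega
  have e4 : 2*j+r+2-(j+1) = j+r+1 := by omega
  have e5 : j+r+2-(j+1) = r+1 := by omega
  have e6 : 2*j+r+3-(j+1) = j+r+2 := by omega
  have e7 : j+r+2-j = r+2 := by omega
  have e8 : 2*j+r+2-j = j+r+2 := by omega
  rw [e1,e2,e3,e4,e5,e6,e7,e8]
  have f1 : ((j+r+3)! : ℚ) = (j+r+3)*(j+r+2)*(j+r+1)! := by
    rw [show j+r+3 = (j+r+2)+1 from rfl, Nat.factorial_succ,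
        show j+r+2 = (j+r+1)+1 from rfl, Nat.factorial_succ]
    push_cast; ring
  have f2 : ((2*j+r+4)! : ℚ) = (2*j+r+4)*(2*j+r+3)*(2*j+r+2)! := by
    rw [show 2*j+r+4 = (2*j+r+3)+1 from rfl, Nat.factorial_succ,
        show 2*j+r+3 = (2*j+r+2)+1 from rfl, Nat.factorial_succ]
    push_cast; ring
  have f3 : ((j+r+2)! : ℚ) = (j+r+2)*(j+r+1)! := by
    rw [show j+r+2 = (j+r+1)+1 from rfl, Nat.factorial_succ]; push_cast; ring
  have f4 : ((2*j+r+3)! : ℚ) = (2*j+r+3)*(2*j+r+2)! := by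
    rw [show 2*j+r+3 = (2*j+r+2)+1 from rfl, Nat.factorial_succ]; push_cast; ring
  have f5 : ((j+1)! : ℚ) = (j+1)*(j)! := by
    rw [Nat.factorial_succ]; push_cast; ring
  have f6 : ((r+2)! : ℚ) = (r+2)*(r+1)*(r)! := by
    rw [show r+2 = (r+1)+1 from rfl, Nat.factorial_succ, Nat.factorial_succ]
    push_cast; ring
  have f7 : ((r+1)! : ℚ) = (r+1)*(r)! := by
    rw [Nat.factorial_succ]; push_cast; ring
  rw [f1,f2,f3,f4,f5,f6,f7]
  have h1 : ((j)! : ℚ) ≠ 0 := Nat.cast_ne_zero.2 (Nat.factorial_ne_zero j)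
  have h2 : ((r)! : ℚ) ≠ 0 := Nat.cast_ne_zero.2 (Nat.factorial_ne_zero r)
  have h3 : ((j+r+1)! : ℚ) ≠ 0 := Nat.cast_ne_zero.2 (Nat.factorial_ne_zero _)
  have h4 : ((2*j+r+2)! : ℚ) ≠ 0 := Nat.cast_ne_zero.2 (Nat.factorial_ne_zero _)
  field_simp
  ring

private lemma delannoy_edge1 (m : ℕ) :
    ((m:ℚ)+2) * ((m+2).choose (m+1)) * ((2*m+3).choose (m+1))
    = (2*(m:ℚ)+3) * ((2*m+2).choose (m+1))
    + (4*(m:ℚ)+6) * ((m+1).choose m) * ((2*m+1).choose m) := by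
  rw [Nat.cast_choose ℚ (by omega : m+1 ≤ m+2),
      Nat.cast_choose ℚ (by omega : m+1 ≤ 2*m+3),
      Nat.cast_choose ℚ (by omega : m+1 ≤ 2*m+2),
      Nat.cast_choose ℚ (by omega : m ≤ m+1),
      Nat.cast_choose ℚ (by omega : m ≤ 2*m+1)]
  have e1 : m+2-(m+1) = 1 := by omega
  have e2 : 2*m+3-(m+1) = m+2 := by omega
  have e3 : 2*m+2-(m+1) = m+1 := by omega
  have e4 : m+1-m = 1 := by omega
  have e5 : 2*m+1-m = m+1 := by omega
  rw [e1,e2,e3,e4,e5]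
  have f1 : ((m+2)! : ℚ) = (m+2)*(m+1)*(m)! := by
    rw [show m+2 = (m+1)+1 from rfl, Nat.factorial_succ, Nat.factorial_succ]
    push_cast; ring
  have f2 : ((2*m+3)! : ℚ) = (2*m+3)*(2*m+2)*(2*m+1)! := by
    rw [show 2*m+3 = (2*m+2)+1 from rfl, Nat.factorial_succ,
        show 2*m+2 = (2*m+1)+1 from rfl, Nat.factorial_succ]
    push_cast; ring
  have f3 : ((2*m+2)! : ℚ) = (2*m+2)*(2*m+1)! := by
    rw [show 2*m+2 = (2*m+1)+1 from rfl, Nat.factorial_succ]; push_cast; ring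
  have f4 : ((m+1)! : ℚ) = (m+1)*(m)! := by
    rw [Nat.factorial_succ]; push_cast; ring
  rw [f1,f2,f3,f4, Nat.factorial_one]
  have h1 : ((m)! : ℚ) ≠ 0 := Nat.cast_ne_zero.2 (Nat.factorial_ne_zero m)
  have h3 : ((2*m+1)! : ℚ) ≠ 0 := Nat.cast_ne_zero.2 (Nat.factorial_ne_zero _)
  field_simp
  ring

private lemma delannoy_edge2 (n : ℕ) :
    ((n:ℚ)+1) * ((2*n+2).choose (n+1)) = (4*(n:ℚ)+2) * ((2*n).choose n) := by
  have h := Nat.succ_mul_centralBinom_succ n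
  simp only [Nat.centralBinom] at h
  have h2 : ((n+1) * (2*(n+1)).choose (n+1) : ℚ) = (2 * (2*n+1) * (2*n).choose n : ℚ) := by
    exact_mod_cast congrArg (Nat.cast : ℕ → ℚ) h
  have e : 2*(n+1) = 2*n+2 := by omega
  rw [e] at h2
  linarith

def delannoyG (n : ℕ) : ℕ → ℤ
  | 0 => 0
  | (k+1) => (4*(n:ℤ)+2) * (n.choose k) * ((n+k).choose k)

private lemma delannoy_key (n k : ℕ) (hn : 1 ≤ n) :
    ((n:ℤ)+1) * ((n+1).choose k) * ((n+1+k).choose k)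
    + (n:ℤ) * ((n-1).choose k) * ((n-1+k).choose k)
    = (2*(n:ℤ)+1) * (n.choose k) * ((n+k).choose k) + delannoyG n k := by
  obtain ⟨m, rfl⟩ : ∃ m, n = m + 1 := ⟨n-1, by omega⟩
  have hQ : ((m:ℚ)+2) * ((m+2).choose k) * ((m+2+k).choose k)
      + ((m:ℚ)+1) * ((m).choose k) * ((m+k).choose k)
      = (2*(m:ℚ)+3) * ((m+1).choose k) * ((m+1+k).choose k)
        + ((delannoyG (m+1) k : ℤ) : ℚ) := by
    match k with
    | 0 => simp [delannoyG]; ring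
    | (j+1) =>
      simp only [delannoyG]
      rcases lt_trichotomy (j+1) (m+1) with hlt | heq | hgt
      · -- j+1 ≤ m, so m = j + r + 1, and n = m+1 = j+r+2
        obtain ⟨r, rfl⟩ : ∃ r, m = j + r + 1 := ⟨m - j - 1, by omega⟩
        have := delannoy_generic j r
        have e1 : j+r+1+2 = j+r+3 := by omega
        have e2 : j+r+3+(j+1) = 2*j+r+4 := by omega
        have e3 : j+r+1+(j+1) = 2*j+r+2 := by omega
        have e4 : j+r+1+1 = j+r+2 := by omega
        have e5 : j+r+2+(j+1) = 2*j+r+3 := by omega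
        have e6 : j+r+1+1+j = 2*j+r+2 := by omega
        rw [e1, e2, e3, e4, e5, e6]
        push_cast
        push_cast at this
        linarith
      · -- j+1 = m+1, i.e. j = m
        obtain rfl : m = j := by omega
        have h0 : (m).choose (m+1) = 0 := Nat.choose_eq_zero_of_lt (by omega)
        have := delannoy_edge1 m
        have e2 : m+2+(m+1) = 2*m+3 := by omega
        have e3 : m+1+(m+1) = 2*m+2 := by omega
        have e5 : m+1+m = 2*m+1 := by omega
        rw [e2, e3, e5, h0, Nat.choose_self]
        push_cast
        push_cast at this
        linarith
      · -- j+1 ≥ m+2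
        rcases Nat.lt_or_ge (m+2) (j+1) with hgt2 | hle2
        · have h1 : (m+2).choose (j+1) = 0 := Nat.choose_eq_zero_of_lt (by omega)
          have h2 : (m).choose (j+1) = 0 := Nat.choose_eq_zero_of_lt (by omega)
          have h3 : (m+1).choose (j+1) = 0 := Nat.choose_eq_zero_of_lt (by omega)
          have h4 : (m+1).choose j = 0 := Nat.choose_eq_zero_of_lt (by omega)
          rw [h1, h2, h3, h4]
          push_cast; ring
        · -- j+1 = m+2, i.e. j = m+1
          obtain rfl : j = m + 1 := by omega
          have h2 : (m).choose (m+2) = 0 := Nat.choose_eq_zero_of_lt (by omega)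
          have h3 : (m+1).choose (m+2) = 0 := Nat.choose_eq_zero_of_lt (by omega)
          have h4 : (m+1).choose (m+1) = 1 := Nat.choose_self _
          have e2 : m+2+(m+2) = 2*(m+1)+2 := by omega
          have e6 : m+1+(m+1) = 2*(m+1) := by omega
          rw [h2, h3, h4, e2, e6, Nat.choose_self]
          have := delannoy_edge2 (m+1)
          push_cast
          push_cast at this
          linarith
  have goalQ : (((m:ℤ)+1+1) * (((m+1)+1).choose k) * (((m+1)+1+k).choose k)
      + ((m:ℤ)+1) * (((m+1)-1).choose k) * (((m+1)-1+k).choose k) : ℚ)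
      = ((2*((m:ℤ)+1)+1) * ((m+1).choose k) * (((m+1)+k).choose k) + delannoyG (m+1) k : ℚ) := by
    have es : (m+1) - 1 = m := by omega
    rw [es]
    push_cast
    push_cast at hQ
    linarith
  exact_mod_cast goalQ

theorem delannoy_recurrence (a : ℕ → ℤ)
    (ha : ∀ n, a n = ∑ k ∈ Finset.range (n + 1),
      (Nat.choose n k : ℤ) * (Nat.choose (n + k) k : ℤ))
    (n : ℕ) (hn : 1 ≤ n) :
    ((n : ℤ) + 1) * a (n + 1) = (6 * (n : ℤ) + 3) * a n - (n : ℤ) * a (n - 1) := by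
  obtain ⟨m, rfl⟩ : ∃ m, n = m + 1 := ⟨n-1, by omega⟩
  simp only [Nat.add_sub_cancel]
  rw [ha (m+1+1), ha (m+1), ha m,
      show m+1+1+1 = m+3 from by omega]
  have extN : (∑ k ∈ Finset.range (m+1+1), ((m+1).choose k : ℤ) * ((m+1+k).choose k : ℤ))
      = ∑ k ∈ Finset.range (m+3), ((m+1).choose k : ℤ) * ((m+1+k).choose k : ℤ) := by
    rw [Finset.sum_range_succ (n := m+2), Nat.choose_eq_zero_of_lt (by omega : m+1 < m+2)]
    simp
  have extM : (∑ k ∈ Finset.range (m+1), ((m).choose k : ℤ) * ((m+k).choose k : ℤ))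
      = ∑ k ∈ Finset.range (m+3), ((m).choose k : ℤ) * ((m+k).choose k : ℤ) := by
    rw [Finset.sum_range_succ (n := m+2), Finset.sum_range_succ (n := m+1),
        Nat.choose_eq_zero_of_lt (by omega : m < m+2),
        Nat.choose_eq_zero_of_lt (by omega : m < m+1)]
    simp
  have hGsum : ∑ k ∈ Finset.range (m+3), delannoyG (m+1) k
      = (4*((m:ℤ)+1)+2) * ∑ k ∈ Finset.range (m+1+1),
          ((m+1).choose k : ℤ) * ((m+1+k).choose k : ℤ) := by
    rw [Finset.sum_range_succ']
    simp only [delannoyG]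
    rw [Finset.mul_sum]
    simp [mul_assoc]
  have L : ∑ k ∈ Finset.range (m+3),
      ((((m:ℤ)+1)+1) * (((m+1)+1).choose k : ℤ) * (((m+1)+1+k).choose k : ℤ)
        + ((m:ℤ)+1) * ((m).choose k : ℤ) * ((m+k).choose k : ℤ))
      = ∑ k ∈ Finset.range (m+3),
      ((2*((m:ℤ)+1)+1) * ((m+1).choose k : ℤ) * (((m+1)+k).choose k : ℤ)
        + delannoyG (m+1) k) := by
    refine Finset.sum_congr rfl fun k _ => ?_
    have := delannoy_key (m+1) k (by omega)
    simpa using this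
  simp only [Finset.sum_add_distrib] at L
  rw [hGsum] at L
  simp only [mul_assoc] at L
  simp only [← Finset.mul_sum] at L
  rw [extN] at L
  rw [extN, extM]
  push_cast at L ⊢
  linear_combination L
end

section
/- If a sequence a : ℕ → ℚ (nonzero everywhere) has closed-form partial sums, then a is hypergeometric: that is, if S(n) = sum_{i=0}^n a(i) satisfies that S(n)/S(n-1) is a fixed rational function of n with S nonvanishing, then a(n)/a(n-1) is also a rational function of n. Concretely: if there exist polynomials P,Q with Q(n)·S(n) = P(n)·S(n-1) for all n ≥ 1 and S(n) ≠ 0, then there exist polynomials P',Q' with Q'(n)·a(n) = P'(n)·a(n-1) for all sufficiently large n. -/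
open Polynomial

lemma aux_eventually_ne (Q : Polynomial ℚ) (hQ : Q ≠ 0) :
    ∃ N : ℕ, ∀ n : ℕ, N ≤ n → Q.eval (n : ℚ) ≠ 0 := by
  have hfin : {x : ℚ | Q.IsRoot x}.Finite := Polynomial.finite_setOf_isRoot hQ
  have hfin2 : {n : ℕ | Q.eval (n : ℚ) = 0}.Finite := by
    have : {n : ℕ | Q.eval (n : ℚ) = 0} = (fun n : ℕ => (n : ℚ)) ⁻¹' {x : ℚ | Q.IsRoot x} := rfl
    rw [this]
    exact Set.Finite.preimage (Set.injOn_of_injective Nat.cast_injective) hfin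
  obtain ⟨N, hN⟩ := hfin2.bddAbove
  refine ⟨N + 1, fun n hn h => ?_⟩
  have := hN h
  omega

theorem closed_form_partial_sums_implies_hypergeometric
    (a : ℕ → ℚ) (ha : ∀ n, a n ≠ 0)
    (S : ℕ → ℚ) (hSdef : ∀ n, S n = ∑ i ∈ Finset.range (n + 1), a i)
    (hSne : ∀ n, S n ≠ 0)
    (P Q : Polynomial ℚ) (hQ : Q ≠ 0)
    (hS : ∀ n : ℕ, 1 ≤ n → Q.eval (n : ℚ) * S n = P.eval (n : ℚ) * S (n - 1)) :
    ∃ P' Q' : Polynomial ℚ, Q' ≠ 0 ∧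
      ∃ N : ℕ, ∀ n : ℕ, N ≤ n → Q'.eval (n : ℚ) * a n = P'.eval (n : ℚ) * a (n - 1) := by
  have ha_eq : ∀ m : ℕ, a (m + 1) = S (m + 1) - S m := by
    intro m
    rw [hSdef, hSdef, Finset.sum_range_succ]; ring
  obtain ⟨N0, hN0⟩ := aux_eventually_ne Q hQ
  have hPQ : P ≠ Q := by
    intro h
    have h1 := hS (N0 + 1) (by omega)
    rw [h] at h1
    have hq := hN0 (N0 + 1) (by omega)
    have h2 : S (N0 + 1) = S (N0 + 1 - 1) := mul_left_cancel₀ hq h1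
    have h3 : a (N0 + 1) = 0 := by
      have := ha_eq N0
      simp only [Nat.add_sub_cancel] at h2
      rw [this, h2, sub_self]
    exact ha _ h3
  have hPQ' : P - Q ≠ 0 := sub_ne_zero.mpr hPQ
  have hcomp : (P - Q).comp (X - 1) ≠ 0 := by
    intro h
    apply hPQ'
    apply Polynomial.zero_of_eval_zero
    intro x
    have := congrArg (eval (x + 1)) h
    simpa [eval_comp] using this
  refine ⟨(P.comp (X - 1)) * (P - Q), Q * (P.comp (X - 1) - Q.comp (X - 1)), ?_, N0 + 2, ?_⟩
  · refine mul_ne_zero hQ ?_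
    rw [← sub_comp]; exact hcomp
  · intro n hn
    obtain ⟨m, rfl⟩ : ∃ m, n = m + 2 := ⟨n - 2, by omega⟩
    have hm : N0 ≤ m := by omega
    have hq2 : Q.eval ((m : ℚ) + 2) ≠ 0 := by
      have := hN0 (m + 2) (by omega); push_cast at this; exact this
    have hq1 : Q.eval ((m : ℚ) + 1) ≠ 0 := by
      have := hN0 (m + 1) (by omega); push_cast at this; exact this
    have eq1 := hS (m + 2) (by omega)
    have eq2 := hS (m + 1) (by omega)
    simp only [Nat.add_sub_cancel] at eq1 eq2
    push_cast at eq1 eq2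
    have han : a (m + 2) = S (m + 2) - S (m + 1) := ha_eq (m + 1)
    have han' : a (m + 1) = S (m + 1) - S m := ha_eq m
    simp only [show m + 2 - 1 = m + 1 from rfl]
    have heval : ∀ R : Polynomial ℚ, (R.comp (X - 1)).eval ((m : ℚ) + 2) = R.eval ((m : ℚ) + 1) := by
      intro R; simp [eval_comp]; ring_nf
    push_cast
    simp only [eval_mul, eval_sub, heval]
    rw [han, han']
    apply mul_left_cancel₀ hq1
    linear_combination ((P.eval ((m:ℚ)+1) - Q.eval ((m:ℚ)+1)) * Q.eval ((m:ℚ)+1)) * eq1 -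
      ((P.eval ((m:ℚ)+2) - Q.eval ((m:ℚ)+2)) * Q.eval ((m:ℚ)+1)) * eq2
end

section
/- The sum of the infinite series sum_{n=0}^∞ 1/(n!·(n^4+n^2+1)) equals e/2. -/
open Filter Finset Topology

noncomputable def E3352u (n : ℕ) : ℝ :=
  (n : ℝ) ^ 2 / (2 * n.factorial * ((n : ℝ) ^ 2 - n + 1))

theorem monthly_E3352 :
    ∑' n : ℕ, (1 : ℝ) / (Nat.factorial n * (n ^ 4 + n ^ 2 + 1)) = Real.exp 1 / 2 := by
  have hfac : ∀ n : ℕ, (0 : ℝ) < n.factorial := fun n =>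
    Nat.cast_pos.mpr n.factorial_pos
  have hq : ∀ n : ℕ, (0 : ℝ) < (n : ℝ) ^ 2 - n + 1 := by
    intro n
    nlinarith [sq_nonneg (2 * (n : ℝ) - 1)]
  have key : ∀ n : ℕ, (1 : ℝ) / (Nat.factorial n * (n ^ 4 + n ^ 2 + 1)) =
      1 / (2 * n.factorial) + (E3352u (n + 1) - E3352u n) := by
    intro n
    have h1 : ((n : ℝ) ^ 2 - n + 1) ≠ 0 := ne_of_gt (hq n)
    have h2 : (((n : ℕ) + 1 : ℕ) : ℝ) ^ 2 - ((n : ℕ) + 1 : ℕ) + 1 ≠ 0 := ne_of_gt (hq (n + 1))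
    have h3 : ((n : ℝ) ^ 4 + n ^ 2 + 1) ≠ 0 := by positivity
    have h4 : ((n.factorial : ℝ)) ≠ 0 := ne_of_gt (hfac n)
    simp only [E3352u, Nat.factorial_succ]
    push_cast at h2 ⊢
    have h5 : ((n : ℝ) ^ 2 + n + 1) ≠ 0 := by nlinarith
    rw [show ((n:ℝ) + 1) ^ 2 - (n + 1) + 1 = (n:ℝ) ^ 2 + n + 1 by ring,
      show (n:ℝ) ^ 4 + n ^ 2 + 1 = ((n:ℝ) ^ 2 + n + 1) * ((n:ℝ) ^ 2 - n + 1) by ring]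
    rw [div_sub_div _ _ (by positivity) (mul_ne_zero (by positivity) h1), div_add_div _ _ (by positivity) (by positivity), div_eq_div_iff (mul_ne_zero h4 (mul_ne_zero h5 h1)) (by positivity)]
    ring
  have hu0 : E3352u 0 = 0 := by simp [E3352u]
  -- limit of u
  have hulim : Tendsto E3352u atTop (𝓝 0) := by
    apply squeeze_zero' (g := fun n : ℕ => 1 / (n : ℝ))
    · filter_upwards with n
      have := hq n
      have := hfac n
      simp only [E3352u]
      positivity
    · filter_upwards [eventually_ge_atTop 1] with n hn
      have h1 : (1 : ℝ) ≤ n := by exact_mod_cast hn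
      have hfn : (n : ℝ) ≤ n.factorial := by exact_mod_cast Nat.self_le_factorial n
      have hden : (n : ℝ) * (n : ℝ) ^ 2 ≤ 2 * n.factorial * ((n : ℝ) ^ 2 - n + 1) := by
        nlinarith [hq n, hfac n, sq_nonneg ((n : ℝ) - 1)]
      have hdpos : (0 : ℝ) < (n : ℝ) * (n : ℝ) ^ 2 := by positivity
      have : E3352u n ≤ (n : ℝ) ^ 2 / ((n : ℝ) * (n : ℝ) ^ 2) := by
        apply div_le_div_of_nonneg_left (by positivity) hdpos hden
      calc E3352u n ≤ (n : ℝ) ^ 2 / ((n : ℝ) * (n : ℝ) ^ 2) := this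
        _ = 1 / n := by field_simp
    · exact tendsto_one_div_atTop_nhds_zero_nat
  -- sum of 1/(2 n!)
  have hexp : HasSum (fun n : ℕ => 1 / (2 * (n.factorial : ℝ))) (Real.exp 1 / 2) := by
    have h := Real.exp_eq_exp_ℝ ▸ (NormedSpace.expSeries_div_hasSum_exp (1 : ℝ))
    have h2 : HasSum (fun n : ℕ => (1 : ℝ) / n.factorial) (Real.exp 1) := by
      simpa [Real.exp_eq_exp_ℝ] using NormedSpace.expSeries_div_hasSum_exp (1 : ℝ)
    have := h2.div_const 2
    convert this using 2 with n
    · rfl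
    ring
  have hmain : Tendsto (fun N => ∑ n ∈ range N, (1 : ℝ) / (Nat.factorial n * (n ^ 4 + n ^ 2 + 1)))
      atTop (𝓝 (Real.exp 1 / 2)) := by
    have heq : ∀ N : ℕ, ∑ n ∈ range N, (1 : ℝ) / (Nat.factorial n * (n ^ 4 + n ^ 2 + 1)) =
        (∑ n ∈ range N, 1 / (2 * (n.factorial : ℝ))) + E3352u N := by
      intro N
      simp only [key]
      rw [Finset.sum_add_distrib, Finset.sum_range_sub E3352u, hu0, sub_zero]
    simp only [heq]
    have := (hexp.tendsto_sum_nat).add hulim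
    simpa using this
  have hpos : ∀ n : ℕ, 0 ≤ (1 : ℝ) / (Nat.factorial n * (n ^ 4 + n ^ 2 + 1)) := by
    intro n
    have := hfac n
    positivity
  exact ((hasSum_iff_tendsto_nat_of_nonneg hpos _).mpr hmain).tsum_eq
end

section
/- The harmonic numbers H(n) = sum_{i=1}^n 1/i are not a hypergeometric (closed-form) sequence: there is no rational function R(n) with H(n) = R(n)·H(n−1) for all large n; equivalently, there are no nonzero polynomials P, Q over ℚ such that Q(n)·H(n) = P(n)·H(n−1) for all n ≥ 2. -/
open Polynomial Filter Topology

private lemma evalcast (p : Polynomial ℚ) (x : ℚ) :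
    ((p.eval x : ℚ) : ℝ) = (p.map (algebraMap ℚ ℝ)).eval ((x : ℝ)) := by
  rw [Polynomial.eval_map]
  have := Polynomial.eval₂_at_apply (p := p) (algebraMap ℚ ℝ) x
  simpa using this.symm

theorem harmonic_not_hypergeometric
    (H : ℕ → ℚ) (hH : ∀ n, H n = ∑ i ∈ Finset.Icc 1 n, (1 : ℚ) / i) :
    ¬ ∃ P Q : Polynomial ℚ, ¬ (P = 0 ∧ Q = 0) ∧
      ∀ n : ℕ, 2 ≤ n → Q.eval (n : ℚ) * H n = P.eval (n : ℚ) * H (n - 1) := by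
  rintro ⟨P, Q, hPQ, heq⟩
  -- H agrees with mathlib's harmonic numbers
  have hHharm : ∀ n, H n = harmonic n := by
    intro n
    rw [hH, harmonic_eq_sum_Icc]
    simp [one_div]
  -- recurrence for H
  have hstep : ∀ m : ℕ, H (m + 1) = H m + 1 / ((m : ℚ) + 1) := by
    intro m
    rw [hH, hH, Finset.sum_Icc_succ_top (Nat.succ_le_succ (Nat.zero_le m))]
    push_cast
    ring
  -- key identity
  have key : ∀ m : ℕ, 1 ≤ m →
      (((m : ℚ) + 1) * ((P - Q).eval ((m : ℚ) + 1))) * H m = Q.eval ((m : ℚ) + 1) := by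
    intro m hm
    have h2 : 2 ≤ m + 1 := by omega
    have hx : ((m : ℚ) + 1) ≠ 0 := by positivity
    have h := heq (m + 1) h2
    rw [Nat.add_sub_cancel] at h
    push_cast at h
    rw [hstep m] at h
    simp only [Polynomial.eval_sub]
    field_simp at h
    linear_combination -h
  by_cases hD : P - Q = 0
  · -- P = Q : then Q vanishes at infinitely many points
    have hQ0 : Q = 0 := by
      apply Polynomial.eq_zero_of_infinite_isRoot
      apply Set.infinite_of_injective_forall_mem (f := fun m : ℕ => ((m : ℚ) + 2))
      · intro a b hab
        simpa using hab
      · intro m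
        have := key (m + 1) (by omega)
        rw [hD] at this
        simp only [Polynomial.eval_zero, mul_zero, zero_mul] at this
        have : Q.eval (((m : ℚ) + 1) + 1) = 0 := by push_cast at this ⊢; linarith [this.symm]
        simpa [Polynomial.IsRoot, add_assoc, show (1:ℚ)+1 = 2 by norm_num] using this
    exact hPQ ⟨by rw [← sub_eq_zero]; simpa [hQ0] using hD, hQ0⟩
  · -- the denominator polynomial
    set G : Polynomial ℚ := Polynomial.X * (P - Q) with hGdef
    have hG : G ≠ 0 := mul_ne_zero Polynomial.X_ne_zero hD
    have keyG : ∀ m : ℕ, 1 ≤ m →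
        G.eval ((m : ℚ) + 1) * H m = Q.eval ((m : ℚ) + 1) := by
      intro m hm
      have := key m hm
      simpa [hGdef] using this
    have hHpos : ∀ m : ℕ, 1 ≤ m → 0 < H m := by
      intro m hm
      rw [hHharm]
      exact harmonic_pos (by omega)
    have hQne : Q ≠ 0 := by
      intro hQ0
      apply hG
      apply Polynomial.eq_zero_of_infinite_isRoot
      apply Set.infinite_of_injective_forall_mem (f := fun m : ℕ => ((m : ℚ) + 2))
      · intro a b hab; simpa using hab
      · intro m
        have h := keyG (m + 1) (by omega)
        rw [hQ0] at h
        simp only [Polynomial.eval_zero] at h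
        have hne := (hHpos (m + 1) (by omega)).ne'
        have : G.eval (((m : ℚ) + 1) + 1) = 0 := by
          rcases mul_eq_zero.mp h with h' | h'
          · push_cast at h' ⊢; convert h' using 2 <;> push_cast <;> ring
          · exact absurd h' hne
        simpa [Polynomial.IsRoot, show ((m:ℚ)+1)+1 = (m:ℚ)+2 by ring] using this
    -- move to ℝ
    set f := algebraMap ℚ ℝ
    set Qr := Q.map f with hQr
    set Gr := G.map f with hGr
    have hfinj : Function.Injective f := (algebraMap ℚ ℝ).injective
    have hQrne : Qr ≠ 0 := by
      simpa [hQr, Polynomial.map_eq_zero_iff hfinj] using hQne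
    have hGrne : Gr ≠ 0 := by
      simpa [hGr, Polynomial.map_eq_zero_iff hfinj] using hG
    have hdegQ : Qr.degree = Q.degree := Polynomial.degree_map_eq_of_injective hfinj Q
    have hdegG : Gr.degree = G.degree := Polynomial.degree_map_eq_of_injective hfinj G
    -- sequence x m = m + 1 in ℝ tends to atTop
    have tnat : Tendsto (fun m : ℕ => (m : ℝ) + 1) atTop atTop :=
      tendsto_atTop_add_const_right _ 1 tendsto_natCast_atTop_atTop
    -- real version of the key identity
    have keyR : ∀ m : ℕ, 1 ≤ m →
        Gr.eval ((m : ℝ) + 1) * ((H m : ℚ) : ℝ) = Qr.eval ((m : ℝ) + 1) := by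
      intro m hm
      have := keyG m hm
      have hc := congrArg (fun q : ℚ => (q : ℝ)) this
      push_cast at hc
      rw [evalcast, evalcast] at hc
      push_cast at hc
      simpa [hQr, hGr, f] using hc
    -- eventually Gr doesn't vanish along the sequence
    have hGev : ∀ᶠ m : ℕ in atTop, Gr.eval ((m : ℝ) + 1) ≠ 0 := by
      have := tnat.eventually (Polynomial.eventually_no_roots Gr hGrne)
      filter_upwards [this] with m hm
      exact hm
    have hHev : ∀ᶠ m : ℕ in atTop, ((H m : ℚ) : ℝ) =
        Qr.eval ((m : ℝ) + 1) / Gr.eval ((m : ℝ) + 1) := by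
      filter_upwards [hGev, eventually_ge_atTop 1] with m hm hm1
      rw [eq_div_iff hm, mul_comm]
      exact keyR m hm1
    -- H tends to atTop
    have hHtop : Tendsto (fun m : ℕ => ((H m : ℚ) : ℝ)) atTop atTop := by
      apply tendsto_atTop_mono (fun m : ℕ => ?_)
        (Real.tendsto_log_atTop.comp tnat)
      have := log_add_one_le_harmonic m
      rw [hHharm]
      simpa using this
    -- H m / (m+1) tends to 0
    have hHdiv : Tendsto (fun m : ℕ => ((H m : ℚ) : ℝ) / ((m : ℝ) + 1)) atTop (𝓝 0) := by
      apply squeeze_zero' (g := fun m : ℕ => (1 + Real.log ((m : ℝ) + 1)) / ((m : ℝ) + 1))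
      · filter_upwards [eventually_ge_atTop 1] with m hm
        have := (hHpos m hm).le
        positivity
      · filter_upwards [eventually_ge_atTop 1] with m hm
        apply div_le_div_of_nonneg_right ?_ (by positivity)
        · rw [hHharm]
          refine (harmonic_le_one_add_log m).trans ?_
          have h1 : (1:ℝ) ≤ (m:ℝ) := by exact_mod_cast hm
          have := Real.log_le_log (by linarith) (by linarith : (m:ℝ) ≤ (m:ℝ)+1)
          linarith
      · have h1 : Tendsto (fun x : ℝ => (1 + Real.log x) / x) atTop (𝓝 0) := by
          have ha : Tendsto (fun x : ℝ => 1 / x) atTop (𝓝 0) := by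
            simpa using tendsto_inv_atTop_zero (𝕜 := ℝ)
          have hb : Tendsto (fun x : ℝ => Real.log x / x) atTop (𝓝 0) := by
            simpa using Real.isLittleO_log_id_atTop.tendsto_div_nhds_zero
          have := ha.add hb
          simpa [add_div] using this
        exact h1.comp tnat
    -- case analysis on degrees
    rcases lt_trichotomy Qr.degree Gr.degree with hlt | heqd | hgt
    · -- ratio tends to 0, but H tends to atTop
      have := (Polynomial.div_tendsto_zero_of_degree_lt Qr Gr hlt).comp tnat
      have hT : Tendsto (fun m : ℕ => ((H m : ℚ) : ℝ)) atTop (𝓝 0) :=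
        Tendsto.congr' (hHev.mono fun m hm => hm.symm) this
      exact not_tendsto_nhds_of_tendsto_atTop hHtop 0 hT
    · have := (Polynomial.div_tendsto_leadingCoeff_div_of_degree_eq Qr Gr heqd).comp tnat
      have hT : Tendsto (fun m : ℕ => ((H m : ℚ) : ℝ)) atTop
          (𝓝 (Qr.leadingCoeff / Gr.leadingCoeff)) :=
        Tendsto.congr' (hHev.mono fun m hm => hm.symm) this
      exact not_tendsto_nhds_of_tendsto_atTop hHtop _ hT
    · -- deg Q > deg G : compare with X * Gr
      set Gr2 : Polynomial ℝ := Polynomial.X * Gr with hGr2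
      have hGr2ne : Gr2 ≠ 0 := mul_ne_zero Polynomial.X_ne_zero hGrne
      have hdeg2 : Gr2.degree = 1 + Gr.degree := by
        rw [hGr2, Polynomial.degree_mul, Polynomial.degree_X]
      have hHev2 : ∀ᶠ m : ℕ in atTop, ((H m : ℚ) : ℝ) / ((m : ℝ) + 1) =
          Qr.eval ((m : ℝ) + 1) / Gr2.eval ((m : ℝ) + 1) := by
        filter_upwards [hHev, hGev, eventually_ge_atTop 1] with m hm hG0 hm1
        rw [hm, hGr2]
        simp only [Polynomial.eval_mul, Polynomial.eval_X]
        rw [div_div, mul_comm]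
      rcases lt_trichotomy Qr.degree Gr2.degree with h2lt | h2eq | h2gt
      · -- impossible: Gr.degree < Qr.degree < Gr.degree + 1
        have hb : Gr.degree ≠ ⊥ := Polynomial.degree_ne_bot.mpr hGrne
        rw [hdeg2] at h2lt
        rcases Polynomial.degree_eq_natDegree hGrne with hG'
        rcases Polynomial.degree_eq_natDegree hQrne with hQ'
        rw [hG', hQ'] at hgt h2lt
        norm_cast at hgt h2lt
        omega
      · -- ratio tends to nonzero constant, but H/(m+1) tends to 0
        have := (Polynomial.div_tendsto_leadingCoeff_div_of_degree_eq Qr Gr2 h2eq).comp tnat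
        have hT : Tendsto (fun m : ℕ => ((H m : ℚ) : ℝ) / ((m : ℝ) + 1)) atTop
            (𝓝 (Qr.leadingCoeff / Gr2.leadingCoeff)) :=
          Tendsto.congr' (hHev2.mono fun m hm => hm.symm) this
        have hc0 : Qr.leadingCoeff / Gr2.leadingCoeff = 0 := tendsto_nhds_unique hT hHdiv
        have : Qr.leadingCoeff / Gr2.leadingCoeff ≠ 0 :=
          div_ne_zero (Polynomial.leadingCoeff_ne_zero.mpr hQrne)
            (Polynomial.leadingCoeff_ne_zero.mpr hGr2ne)
        exact this hc0
      · -- |ratio| tends to atTop, but H/(m+1) tends to 0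
        have := (Polynomial.abs_div_tendsto_atTop_of_degree_gt Qr Gr2 h2gt hGr2ne).comp tnat
        have hT : Tendsto (fun m : ℕ => |((H m : ℚ) : ℝ) / ((m : ℝ) + 1)|) atTop atTop :=
          Tendsto.congr' (hHev2.mono fun m hm => by simp [hm]) this
        have habs : Tendsto (fun m : ℕ => |((H m : ℚ) : ℝ) / ((m : ℝ) + 1)|) atTop (𝓝 0) := by
          simpa using hHdiv.abs
        exact not_tendsto_nhds_of_tendsto_atTop hT 0 habs
end

section
/- For all natural numbers n and all integers m, sum over nonnegative integers k₁, k₂ with k₁ ≤ n, k₂ ≤ m of (−1)^{k₁+k₂}·(k₁+k₂)!/(k₁!²·k₂!²·(n−k₁)!·(m−k₂)!) equals 0 whenever n ≠ m. -/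
open Finset Polynomial

lemma negpow (j : ℕ) : ((-(X+1):ℤ[X]) + 1) ^ j = (-X)^j := by ring_nf

lemma lemA (m a : ℕ) :
    ∑ k ∈ range (m + 1), (-1 : ℤ) ^ k * m.choose k * (a + k).choose a
      = (-1) ^ m * a.choose m := by
  have h2 : ∑ k ∈ range (m + 1), C ((-1 : ℤ) ^ k * m.choose k) * (X + 1) ^ k
      = (-X) ^ m := by
    rw [← negpow, add_pow]
    refine Finset.sum_congr rfl fun k hk => ?_
    rw [one_pow, show (-((X:ℤ[X])+1)) ^ k = (-1)^k * (X+1)^k by rw [neg_pow]]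
    simp [C_mul, C_pow]
    ring
  have key : ∑ k ∈ range (m + 1), C ((-1 : ℤ) ^ k * m.choose k) * (X + 1) ^ (a + k)
      = C ((-1)^m) * ((X + 1) ^ a * X ^ m) := by
    calc ∑ k ∈ range (m + 1), C ((-1 : ℤ) ^ k * m.choose k) * (X + 1) ^ (a + k)
        = (X+1)^a * ∑ k ∈ range (m + 1), C ((-1 : ℤ) ^ k * m.choose k) * (X + 1) ^ k := by
          rw [Finset.mul_sum]; refine Finset.sum_congr rfl fun k hk => ?_; rw [pow_add]; ring
      _ = (X+1)^a * (-X)^m := by rw [h2]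
      _ = C ((-1)^m) * ((X + 1) ^ a * X ^ m) := by
          rw [neg_pow, map_pow, map_neg, map_one]; ring
  have := congrArg (fun p => Polynomial.coeff p a) key
  simp only [finset_sum_coeff, coeff_C_mul, coeff_X_add_one_pow] at this
  rw [this, coeff_mul_X_pow']
  rcases le_or_gt m a with hma | hma
  · rw [if_pos hma, coeff_X_add_one_pow, Nat.choose_symm hma]
  · rw [if_neg (not_le.mpr hma), mul_zero, Nat.choose_eq_zero_of_lt hma]
    simp

lemma lemB (n m : ℕ) (h : n ≠ m) :
    ∑ k ∈ range (n + 1), (-1 : ℤ) ^ k * n.choose k * k.choose m = 0 := by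
  have key : ∑ k ∈ range (n + 1), C ((-1 : ℤ) ^ k * n.choose k) * (X + 1) ^ k
      = (-X : ℤ[X]) ^ n := by
    rw [← negpow, add_pow]
    refine Finset.sum_congr rfl fun k hk => ?_
    rw [one_pow, show (-((X:ℤ[X])+1)) ^ k = (-1)^k * (X+1)^k by rw [neg_pow]]
    simp [C_mul, C_pow]
    ring
  have key2 : ∑ k ∈ range (n + 1), C ((-1 : ℤ) ^ k * n.choose k) * (X + 1) ^ k
      = C ((-1:ℤ)^n) * X ^ n :=
    key.trans (by rw [neg_pow, map_pow, map_neg, map_one])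
  have := congrArg (fun p => Polynomial.coeff p m) key2
  simp only [finset_sum_coeff, coeff_C_mul, coeff_X_add_one_pow] at this
  rw [this, coeff_X_pow, if_neg (Ne.symm h), mul_zero]

lemma lemC (n m : ℕ) (h : n ≠ m) :
    ∑ k₁ ∈ range (n + 1), ∑ k₂ ∈ range (m + 1),
        (-1 : ℤ) ^ (k₁ + k₂) * n.choose k₁ * m.choose k₂ * (k₁ + k₂).choose k₁ = 0 := by
  have step : ∀ k₁, ∑ k₂ ∈ range (m + 1),
      (-1 : ℤ) ^ (k₁ + k₂) * n.choose k₁ * m.choose k₂ * (k₁ + k₂).choose k₁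
      = (-1) ^ m * ((-1 : ℤ) ^ k₁ * n.choose k₁ * k₁.choose m) := by
    intro k₁
    have : ∑ k₂ ∈ range (m + 1),
        (-1 : ℤ) ^ (k₁ + k₂) * n.choose k₁ * m.choose k₂ * (k₁ + k₂).choose k₁
        = ((-1) ^ k₁ * n.choose k₁) *
          ∑ k₂ ∈ range (m + 1), (-1 : ℤ) ^ k₂ * m.choose k₂ * (k₁ + k₂).choose k₁ := by
      rw [Finset.mul_sum]
      refine Finset.sum_congr rfl fun k₂ _ => ?_
      rw [pow_add]; ring
    rw [this, lemA m k₁]; ring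
  simp only [step]
  rw [← Finset.mul_sum, lemB n m h, mul_zero]

theorem orthogonality_double_sum (n m : ℕ) (hnm : n ≠ m) :
    ∑ k₁ ∈ Finset.range (n + 1), ∑ k₂ ∈ Finset.range (m + 1),
        (-1 : ℚ) ^ (k₁ + k₂) * Nat.factorial (k₁ + k₂) /
          ((Nat.factorial k₁) ^ 2 * (Nat.factorial k₂) ^ 2 *
            Nat.factorial (n - k₁) * Nat.factorial (m - k₂))
      = 0 := by
  have hterm : ∀ k₁ ∈ range (n + 1), ∀ k₂ ∈ range (m + 1),
      (-1 : ℚ) ^ (k₁ + k₂) * Nat.factorial (k₁ + k₂) /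
          ((Nat.factorial k₁) ^ 2 * (Nat.factorial k₂) ^ 2 *
            Nat.factorial (n - k₁) * Nat.factorial (m - k₂))
      = (((-1 : ℤ) ^ (k₁ + k₂) * n.choose k₁ * m.choose k₂ * (k₁ + k₂).choose k₁ : ℤ) : ℚ) /
          ((n.factorial * m.factorial : ℕ) : ℚ) := by
    intro k₁ hk₁ k₂ hk₂
    rw [Finset.mem_range, Nat.lt_succ_iff] at hk₁ hk₂
    have e1 : (k₁ + k₂).factorial = (k₁ + k₂).choose k₁ * k₁.factorial * k₂.factorial := by
      rw [← Nat.choose_mul_factorial_mul_factorial (Nat.le_add_right k₁ k₂),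
        Nat.add_sub_cancel_left]
    have e2 : n.factorial = n.choose k₁ * k₁.factorial * (n - k₁).factorial :=
      (Nat.choose_mul_factorial_mul_factorial hk₁).symm
    have e3 : m.factorial = m.choose k₂ * k₂.factorial * (m - k₂).factorial :=
      (Nat.choose_mul_factorial_mul_factorial hk₂).symm
    have d1 : ((Nat.factorial k₁ : ℚ) ^ 2 * (Nat.factorial k₂) ^ 2 *
        Nat.factorial (n - k₁) * Nat.factorial (m - k₂)) ≠ 0 := by
      positivity
    have d2 : ((n.factorial * m.factorial : ℕ) : ℚ) ≠ 0 := by positivity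
    rw [div_eq_div_iff d1 d2]
    push_cast [e1, e2, e3]
    ring
  rw [Finset.sum_congr rfl fun k₁ hk₁ => Finset.sum_congr rfl fun k₂ hk₂ => hterm k₁ hk₁ k₂ hk₂]
  simp only [← Finset.sum_div]
  rw [show (∑ k₁ ∈ range (n + 1), ∑ k₂ ∈ range (m + 1),
      (((-1 : ℤ) ^ (k₁ + k₂) * n.choose k₁ * m.choose k₂ * (k₁ + k₂).choose k₁ : ℤ) : ℚ))
      = (((∑ k₁ ∈ range (n + 1), ∑ k₂ ∈ range (m + 1),
      ((-1 : ℤ) ^ (k₁ + k₂) * n.choose k₁ * m.choose k₂ * (k₁ + k₂).choose k₁) : ℤ)) : ℚ) by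
    push_cast; rfl]
  rw [lemC n m hnm]
  simp
end

section
/- If f : ℕ → ℚ(n) satisfies the Gosper functional equation q(k+1)·f(k) − r(k)·f(k−1) = p(k) for polynomials p, q, r with gcd(q(k), r(k+j)) = 1 for every integer j ≥ 0, and f is a rational function of k, then f is in fact a polynomial in k. -/
open Polynomial

private lemma coprime_no_common_root {K : Type*} [Field K] {f g : Polynomial K}
    (h : IsCoprime f g) {a : K} (hf : f.eval a = 0) (hg : g.eval a = 0) : False := by
  obtain ⟨u, v, huv⟩ := h
  have := congrArg (Polynomial.eval a) huv
  simp [hf, hg] at this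

private theorem gosper_aux {K : Type*} [Field K] [IsAlgClosed K] [CharZero K]
    (p q r c d : Polynomial K) (hd : d ≠ 0) (hcd : IsCoprime c d)
    (hgcd : ∀ j : ℕ, IsCoprime q (r.comp (X + C (j : K))))
    (heq : q.comp (X + C 1) * c * d.comp (X - C 1) - r * c.comp (X - C 1) * d
      = p * d * d.comp (X - C 1)) :
    IsUnit d := by
  by_contra hu
  -- d has a root
  have hdeg : d.degree ≠ 0 := fun h => hu (isUnit_iff_degree_eq_zero.2 h)
  obtain ⟨a0, ha0⟩ := IsAlgClosed.exists_root d hdeg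
  -- the evaluated functional equation
  have heval : ∀ x : K,
      q.eval (x + 1) * c.eval x * d.eval (x - 1) - r.eval x * c.eval (x - 1) * d.eval x
        = p.eval x * d.eval x * d.eval (x - 1) := by
    intro x
    have := congrArg (Polynomial.eval x) heq
    simpa [eval_comp] using this
  -- the set of shifts
  set S : Set ℕ := {j | ∃ a : K, d.eval a = 0 ∧ d.eval (a + (j : K)) = 0} with hS
  have h0S : (0 : ℕ) ∈ S := ⟨a0, ha0, by simpa using ha0⟩
  have hSfin : S.Finite := by
    have hR : {x : K | d.IsRoot x}.Finite := Polynomial.finite_setOf_isRoot hd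
    have hF : ((fun pr : K × K => pr.2 - pr.1) '' ({x : K | d.IsRoot x} ×ˢ {x : K | d.IsRoot x})).Finite :=
      (hR.prod hR).image _
    refine (hF.preimage (Nat.cast_injective.injOn)).subset ?_
    rintro j ⟨a, ha, haj⟩
    exact ⟨(a, a + (j : K)), ⟨ha, haj⟩, by ring⟩
  -- maximal shift
  set N := hSfin.toFinset.max' ⟨0, hSfin.mem_toFinset.2 h0S⟩ with hNdef
  have hNS : N ∈ S := hSfin.mem_toFinset.1 (hSfin.toFinset.max'_mem _)
  have hmax : ∀ j ∈ S, j ≤ N := fun j hj => hSfin.toFinset.le_max' j (hSfin.mem_toFinset.2 hj)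
  obtain ⟨a, ha, haN⟩ := hNS
  -- coprimality of c and d at roots of d
  have hc : ∀ x : K, d.eval x = 0 → c.eval x ≠ 0 := fun x hx hcx =>
    coprime_no_common_root hcd hcx hx
  -- d(a-1) ≠ 0
  have hdm1 : d.eval (a - 1) ≠ 0 := by
    intro h
    have : (N + 1 : ℕ) ∈ S := by
      refine ⟨a - 1, h, ?_⟩
      have : a - 1 + ((N : K) + 1) = a + (N : K) := by ring
      rw [Nat.cast_add, Nat.cast_one, this]; exact haN
    exact absurd (hmax _ this) (by omega)
  -- d(a+N+1) ≠ 0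
  have hdN1 : d.eval (a + (N : K) + 1) ≠ 0 := by
    intro h
    have : (N + 1 : ℕ) ∈ S := by
      refine ⟨a, ha, ?_⟩
      rw [Nat.cast_add, Nat.cast_one, ← add_assoc]; exact h
    exact absurd (hmax _ this) (by omega)
  -- q(a+1) = 0
  have hq : q.eval (a + 1) = 0 := by
    have h1 := heval a
    rw [ha] at h1
    simp only [mul_zero, zero_mul, sub_zero] at h1
    rcases mul_eq_zero.1 h1 with h2 | h2
    · rcases mul_eq_zero.1 h2 with h3 | h3
      · exact h3
      · exact absurd h3 (hc a ha)
    · exact absurd h2 hdm1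
  -- r(a+N+1) = 0
  have hr : r.eval (a + (N : K) + 1) = 0 := by
    have h1 := heval (a + (N : K) + 1)
    have he : a + (N : K) + 1 - 1 = a + (N : K) := by ring
    rw [he, haN] at h1
    simp only [mul_zero, zero_mul, zero_sub, neg_eq_zero] at h1
    rcases mul_eq_zero.1 h1 with h2 | h2
    · rcases mul_eq_zero.1 h2 with h3 | h3
      · exact h3
      · exact absurd h3 (hc _ haN)
    · exact absurd h2 hdN1
  -- contradiction with coprimality of q and r(x+N)
  refine coprime_no_common_root (hgcd N) hq ?_
  rw [eval_comp]
  simp only [eval_add, eval_X, eval_C]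
  have : a + 1 + (N : K) = a + (N : K) + 1 := by ring
  rw [this]; exact hr

/-- Gosper's lemma: if a rational function `f = c/d` (in lowest terms, `d ≠ 0`) satisfies
`q(k+1)·f(k) − r(k)·f(k−1) = p(k)` where `gcd(q(k), r(k+j)) = 1` for all integers `j ≥ 0`,
then `f` is a polynomial, i.e. `d` is a unit. -/
theorem gosper_rational_is_polynomial {K : Type*} [Field K] [CharZero K]
    (p q r c d : Polynomial K) (hd : d ≠ 0) (hcd : IsCoprime c d)
    (hgcd : ∀ j : ℕ, IsCoprime q (r.comp (X + C (j : K))))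
    (heq : q.comp (X + C 1) * c * d.comp (X - C 1) - r * c.comp (X - C 1) * d
      = p * d * d.comp (X - C 1)) :
    IsUnit d := by
  set L := AlgebraicClosure K
  set φ : K →+* L := algebraMap K L
  have hφ : Function.Injective φ := φ.injective
  have hd' : d.map φ ≠ 0 := (Polynomial.map_ne_zero_iff hφ).2 hd
  have hcd' : IsCoprime (c.map φ) (d.map φ) := hcd.map (Polynomial.mapRingHom φ)
  have hgcd' : ∀ j : ℕ, IsCoprime (q.map φ) ((r.map φ).comp (X + C (j : L))) := by
    intro j
    have := (hgcd j).map (Polynomial.mapRingHom φ)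
    simpa [Polynomial.map_comp, Polynomial.C_eq_natCast] using this
  have heq' : (q.map φ).comp (X + C 1) * (c.map φ) * (d.map φ).comp (X - C 1)
      - (r.map φ) * (c.map φ).comp (X - C 1) * (d.map φ)
      = (p.map φ) * (d.map φ) * (d.map φ).comp (X - C 1) := by
    have := congrArg (Polynomial.map φ) heq
    simpa [Polynomial.map_comp] using this
  have := gosper_aux (p.map φ) (q.map φ) (r.map φ) (c.map φ) (d.map φ) hd' hcd' hgcd' heq'
  rw [isUnit_iff_degree_eq_zero] at this ⊢
  rwa [degree_map] at this
end
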